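/- Let k ∈ ℕ, α ≥ 0, 0 < p ≤ 1, and define a_k(x,y) = 2^{α_k(2/p−2)−2[α]−2} (D_{2^{α_k+[α]+1}}(x) − D_{2^{α_k}}(x)) (D_{2^{α_k+[α]+1}}(y) − D_{2^{α_k}}(y)) on G × G, where α_k ≥ 2 is an integer and [α] is the integer part of α. Then a_k is supported on I_{α_k} × I_{α_k}, has integral zero over I_{α_k} × I_{α_k}, and satisfies ‖a_k‖_∞ ≤ 2^{2α_k/p} = μ(I_{α_k} × I_{α_k})^{−1/p}; i.e. a_k is a p-atom. -/

import Mathlib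

open MeasureTheory Filter Topology
open scoped ENNReal NNReal BigOperators

noncomputable section

instance : TopologicalSpace (ZMod 2) := ⊥
instance : DiscreteTopology (ZMod 2) := ⟨rfl⟩
instance : MeasurableSpace (ZMod 2) := ⊤
instance : BorelSpace (ZMod 2) := ⟨borel_eq_top_of_discrete.symm⟩

/-- The Walsh group: countable product of `ZMod 2`. -/
abbrev WG : Type := ℕ → ZMod 2

/-- The normalized Haar (= product) measure on the Walsh group. -/
def μG : Measure WG := Measure.addHaarMeasure (⊤ : TopologicalSpace.PositiveCompacts WG)

/-- Haar measure on `G × G`. -/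
def μ2 : Measure (WG × WG) := μG.prod μG

/-- Rademacher function. -/
def rade (k : ℕ) (x : WG) : ℝ := (-1 : ℝ) ^ (x k).val

/-- Walsh–Paley function. -/
def walsh (n : ℕ) (x : WG) : ℝ :=
  ∏ k ∈ Finset.range n, if n.testBit k then rade k x else 1

/-- Walsh–Dirichlet kernel. -/
def Dir (n : ℕ) (x : WG) : ℝ := ∑ k ∈ Finset.range n, walsh k x

/-- Dyadic interval of rank `n` around `0`. -/
def Iset (n : ℕ) : Set WG := {x | ∀ i < n, x i = 0}

/-- Dyadic interval of rank `n` around `c`. -/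
def IsetC (n : ℕ) (c : WG) : Set WG := {x | ∀ i < n, x i = c i}

/-- `(i,j)`-th Walsh–Fourier coefficient of an integrable function on `G²`. -/
def fhat (f : WG × WG → ℝ) (i j : ℕ) : ℝ :=
  ∫ z, f z * walsh i z.1 * walsh j z.2 ∂μ2

/-- Rectangular partial sum of the 2D Walsh–Fourier series of a function. -/
def Spart (M N : ℕ) (f : WG × WG → ℝ) (z : WG × WG) : ℝ :=
  ∑ i ∈ Finset.range M, ∑ j ∈ Finset.range N, fhat f i j * walsh i z.1 * walsh j z.2

/-- `p`-atom on `G²`. -/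
def IsPAtom (p : ℝ) (a : WG × WG → ℝ) : Prop :=
  Measurable a ∧ ∃ (n : ℕ) (c d : WG),
    (∀ z, z ∉ (IsetC n c) ×ˢ (IsetC n d) → a z = 0) ∧
    (∫ z in (IsetC n c) ×ˢ (IsetC n d), a z ∂μ2) = 0 ∧
    ∀ z, |a z| ≤ (μ2 ((IsetC n c) ×ˢ (IsetC n d))).toReal ^ (-(1:ℝ)/p)

/-- The dyadic filtration on `G²`. -/
def dyadicF : Filtration ℕ (inferInstance : MeasurableSpace (WG × WG)) where
  seq n := MeasurableSpace.comap
      (fun z : WG × WG => ((fun i : Fin n => z.1 i), (fun i : Fin n => z.2 i))) inferInstance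
  mono' := by
    intro n m hnm
    have : (fun z : WG × WG => ((fun i : Fin n => z.1 i), (fun i : Fin n => z.2 i)))
        = (fun w : (Fin m → ZMod 2) × (Fin m → ZMod 2) =>
            ((fun i : Fin n => w.1 (Fin.castLE hnm i)), (fun i : Fin n => w.2 (Fin.castLE hnm i))))
          ∘ (fun z : WG × WG => ((fun i : Fin m => z.1 i), (fun i : Fin m => z.2 i))) := rfl
    simp only []
    rw [this, ← MeasurableSpace.comap_comp]
    exact MeasurableSpace.comap_mono (Measurable.comap_le (by fun_prop))
  le' := by
    intro n
    exact Measurable.comap_le (by fun_prop)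

/-- The `H_p` quasi-norm of a sequence of functions (martingale) on `G²`. -/
def HpNorm (p : ℝ) (f : ℕ → WG × WG → ℝ) : ℝ≥0∞ :=
  (∫⁻ z, (⨆ n, (‖f n z‖₊ : ℝ≥0∞)) ^ p ∂μ2) ^ (1 / p)

/-- Membership in the dyadic martingale Hardy space `H_p(G²)`. -/
def MemHp (p : ℝ) (f : ℕ → WG × WG → ℝ) : Prop :=
  Martingale f dyadicF μ2 ∧ HpNorm p f < ⊤

/-- Walsh–Fourier coefficients of a martingale. -/
def fhatM (f : ℕ → WG × WG → ℝ) (i j : ℕ) : ℝ :=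
  limUnder atTop (fun n => ∫ z, f n z * walsh i z.1 * walsh j z.2 ∂μ2)

/-- Rectangular partial sums of a martingale. -/
def SpartM (M N : ℕ) (f : ℕ → WG × WG → ℝ) (z : WG × WG) : ℝ :=
  ∑ i ∈ Finset.range M, ∑ j ∈ Finset.range N, fhatM f i j * walsh i z.1 * walsh j z.2

/-- weak-`L^p` quasi-norm on `G²`. -/
def wLp (p : ℝ) (g : WG × WG → ℝ) : ℝ≥0∞ :=
  ⨆ t : ℝ≥0, (t : ℝ≥0∞) * (μ2 {z | (t : ℝ) < |g z|}) ^ (1 / p)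

/-- `L^p` quasi-norm to the `p`-th power, `‖g‖_p^p`, as an extended real. -/
def LpP (p : ℝ) (g : WG × WG → ℝ) : ℝ≥0∞ := ∫⁻ z, (‖g z‖₊ : ℝ≥0∞) ^ p ∂μ2


/-! ### Auxiliary lemmas -/

lemma walsh_eq_prod (n m : ℕ) (h : n < 2 ^ m) (x : WG) :
    walsh n x = ∏ j ∈ Finset.range m, if n.testBit j then rade j x else 1 := by
  unfold walsh
  rcases le_total n m with hnm | hmn
  · apply Finset.prod_subset (Finset.range_subset_range.2 hnm)
    intro j _ hj'
    rw [Finset.mem_range, not_lt] at hj'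
    have : n.testBit j = false :=
      Nat.testBit_lt_two_pow (lt_of_lt_of_le (Nat.lt_two_pow_self (n := n))
        (Nat.pow_le_pow_right (by norm_num) hj'))
    simp [this]
  · symm
    apply Finset.prod_subset (Finset.range_subset_range.2 hmn)
    intro j _ hj'
    rw [Finset.mem_range, not_lt] at hj'
    have : n.testBit j = false :=
      Nat.testBit_lt_two_pow (lt_of_lt_of_le h (Nat.pow_le_pow_right (by norm_num) hj'))
    simp [this]

lemma walsh_two_pow_add (n k : ℕ) (hk : k < 2 ^ n) (x : WG) :
    walsh (2 ^ n + k) x = rade n x * walsh k x := by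
  have hlt : 2 ^ n + k < 2 ^ (n + 1) := by rw [pow_succ]; omega
  rw [walsh_eq_prod (2 ^ n + k) (n + 1) hlt x, Finset.prod_range_succ,
    walsh_eq_prod k n hk x]
  have h1 : (2 ^ n + k).testBit n = true := by
    rw [Nat.testBit_two_pow_add_eq, Nat.testBit_lt_two_pow hk]; rfl
  have h2 : ∀ j ∈ Finset.range n,
      (if (2 ^ n + k).testBit j then rade j x else 1) = (if k.testBit j then rade j x else 1) := by
    intro j hj
    rw [Nat.testBit_two_pow_add_gt (Finset.mem_range.1 hj)]
  rw [Finset.prod_congr rfl h2, h1]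
  simp [mul_comm]

lemma dir_two_pow (n : ℕ) (x : WG) :
    Dir (2 ^ n) x = ∏ j ∈ Finset.range n, (1 + rade j x) := by
  induction n with
  | zero => simp [Dir, walsh]
  | succ n ih =>
    have h2 : (2 : ℕ) ^ (n + 1) = 2 ^ n + 2 ^ n := by rw [pow_succ]; ring
    unfold Dir at *
    rw [h2, Finset.sum_range_add]
    have h3 : ∀ k ∈ Finset.range (2 ^ n), walsh (2 ^ n + k) x = rade n x * walsh k x :=
      fun k hk => walsh_two_pow_add n k (Finset.mem_range.1 hk) x
    rw [Finset.sum_congr rfl h3, ← Finset.mul_sum, Finset.prod_range_succ, ← ih]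
    ring

lemma dir_indicator (n : ℕ) (x : WG) :
    Dir (2 ^ n) x = (Iset n).indicator (fun _ => ((2 : ℝ) ^ n)) x := by
  rw [dir_two_pow]
  by_cases hx : x ∈ Iset n
  · rw [Set.indicator_of_mem hx]
    have h : ∀ j ∈ Finset.range n, (1 + rade j x) = 2 := by
      intro j hj
      unfold rade
      rw [hx j (Finset.mem_range.1 hj)]
      norm_num
    rw [Finset.prod_congr rfl h, Finset.prod_const, Finset.card_range]
  · rw [Set.indicator_of_notMem hx]
    simp only [Iset, Set.mem_setOf_eq, not_forall] at hx
    obtain ⟨j, hj, hj0⟩ := hx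
    apply Finset.prod_eq_zero (Finset.mem_range.2 hj)
    have hv : (x j).val = 1 := by
      have h1 : (x j).val < 2 := ZMod.val_lt (x j)
      have h2 : (x j).val ≠ 0 := by
        intro h0
        exact hj0 ((ZMod.val_eq_zero _).1 h0)
      omega
    unfold rade
    rw [hv]
    norm_num

lemma measurableSet_Iset (n : ℕ) : MeasurableSet (Iset n) := by
  have h : Iset n = ⋂ i ∈ Finset.range n, (fun x : WG => x i) ⁻¹' {0} := by
    ext x; simp [Iset]
  rw [h]
  exact Finset.measurableSet_biInter _ (fun i _ => measurable_pi_apply i trivial)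

lemma μG_univ : μG Set.univ = 1 := by
  have := MeasureTheory.Measure.addHaarMeasure_self
    (K₀ := (⊤ : TopologicalSpace.PositiveCompacts WG))
  rwa [TopologicalSpace.PositiveCompacts.coe_top] at this

instance : IsFiniteMeasure μG := ⟨by rw [μG_univ]; exact ENNReal.one_lt_top⟩
instance : μG.IsAddLeftInvariant := by
  unfold μG; infer_instance

lemma IsetC_preimage (n : ℕ) (c : WG) : IsetC n c = (fun x => c + x) ⁻¹' Iset n := by
  ext x
  simp only [IsetC, Iset, Set.mem_setOf_eq, Set.mem_preimage, Pi.add_apply]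
  have key : ∀ a b : ZMod 2, a + b = 0 ↔ b = a := by decide
  exact forall₂_congr fun i _ => ((key (c i) (x i)).symm)

lemma μ_IsetC (n : ℕ) (c : WG) : μG (IsetC n c) = μG (Iset n) := by
  rw [IsetC_preimage, measure_preimage_add]

def extv (n : ℕ) (v : Fin n → ZMod 2) : WG := fun i => if h : i < n then v ⟨i, h⟩ else 0

lemma μ_Iset (n : ℕ) : μG (Iset n) = ((2 : ℝ≥0∞) ^ n)⁻¹ := by
  set T : (Fin n → ZMod 2) → Set WG := fun v => IsetC n (extv n v) with hT
  have hmeas : ∀ v, MeasurableSet (T v) := by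
    intro v
    show MeasurableSet (IsetC n (extv n v))
    rw [IsetC_preimage]
    exact (measurableSet_Iset n).preimage (measurable_const_add _)
  have hdisj : Pairwise (Function.onFun Disjoint T) := by
    intro v w hvw
    rw [Function.onFun, Set.disjoint_left]
    intro x hv hw
    apply hvw
    funext i
    have h1 := hv i.1 i.2
    have h2 := hw i.1 i.2
    simp only [extv, i.2, dif_pos] at h1 h2
    exact h1.symm.trans h2
  have hunion : (⋃ v, T v) = Set.univ := by
    ext x
    simp only [Set.mem_univ, iff_true, Set.mem_iUnion]
    refine ⟨fun i => x i.1, fun i hi => ?_⟩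
    simp [extv, hi]
  have h1 : (1 : ℝ≥0∞) = ∑' v, μG (T v) := by
    rw [← measure_iUnion hdisj hmeas, hunion, μG_univ]
  have h2 : ∀ v, μG (T v) = μG (Iset n) := fun v => μ_IsetC n (extv n v)
  rw [tsum_congr h2, tsum_fintype, Finset.sum_const, Finset.card_univ] at h1
  have hcard : Fintype.card (Fin n → ZMod 2) = 2 ^ n := by simp
  rw [hcard] at h1
  have h3 : (2 : ℝ≥0∞) ^ n * μG (Iset n) = 1 := by
    rw [h1, nsmul_eq_mul]
    norm_num
  have hne : ((2 : ℝ≥0∞) ^ n) ≠ 0 := by positivity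
  have hnt : ((2 : ℝ≥0∞) ^ n) ≠ ⊤ := ENNReal.pow_ne_top (by norm_num)
  calc μG (Iset n) = ((2:ℝ≥0∞)^n)⁻¹ * ((2:ℝ≥0∞)^n * μG (Iset n)) := by
        rw [← mul_assoc, ENNReal.inv_mul_cancel hne hnt, one_mul]
    _ = ((2:ℝ≥0∞)^n)⁻¹ := by rw [h3, mul_one]

lemma Iset_anti {m n : ℕ} (h : m ≤ n) : Iset n ⊆ Iset m :=
  fun x hx i hi => hx i (lt_of_lt_of_le hi h)

lemma measurable_rade (k : ℕ) : Measurable (rade k) := by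
  have h : rade k = (fun v : ZMod 2 => (-1 : ℝ) ^ v.val) ∘ (fun x : WG => x k) := rfl
  rw [h]
  exact measurable_from_top.comp (measurable_pi_apply k)

lemma measurable_walsh (n : ℕ) : Measurable (walsh n) := by
  unfold walsh
  apply Finset.measurable_prod
  intro k _
  by_cases h : n.testBit k
  · simpa [h] using measurable_rade k
  · simp only [h, if_false]
    exact measurable_const

lemma measurable_dir (n : ℕ) : Measurable (Dir n) :=
  Finset.measurable_sum _ (fun k _ => measurable_walsh k)

lemma integrable_dir (n : ℕ) : Integrable (Dir (2 ^ n)) μG := by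
  have h : Dir (2 ^ n) = (Iset n).indicator (fun _ => ((2 : ℝ) ^ n)) := funext (dir_indicator n)
  rw [h]
  exact (integrable_const _).indicator (measurableSet_Iset n)

lemma integral_dir (n : ℕ) : ∫ x, Dir (2 ^ n) x ∂μG = 1 := by
  have h : ∀ x, Dir (2 ^ n) x = (Iset n).indicator (fun _ => ((2 : ℝ) ^ n)) x := dir_indicator n
  rw [funext h, integral_indicator_const _ (measurableSet_Iset n)]
  rw [measureReal_def, μ_Iset, smul_eq_mul]
  rw [ENNReal.toReal_inv]
  simp only [ENNReal.toReal_pow, ENNReal.toReal_ofNat]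
  rw [inv_mul_cancel₀ (by positivity)]

lemma integral_dir_diff (m n : ℕ) : ∫ x, (Dir (2 ^ n) x - Dir (2 ^ m) x) ∂μG = 0 := by
  rw [integral_sub (integrable_dir n) (integrable_dir m), integral_dir, integral_dir]
  ring

lemma dir_diff_supp {m n : ℕ} (h : m ≤ n) {x : WG} (hx : x ∉ Iset m) :
    Dir (2 ^ n) x - Dir (2 ^ m) x = 0 := by
  rw [dir_indicator, dir_indicator, Set.indicator_of_notMem hx,
    Set.indicator_of_notMem (fun hxn => hx (Iset_anti h hxn))]
  ring

lemma dir_diff_abs {m n : ℕ} (h : m ≤ n) (x : WG) :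
    |Dir (2 ^ n) x - Dir (2 ^ m) x| ≤ 2 ^ n := by
  rw [dir_indicator, dir_indicator]
  have hmn : (2 : ℝ) ^ m ≤ 2 ^ n := pow_le_pow_right₀ (by norm_num) h
  by_cases hxn : x ∈ Iset n
  · rw [Set.indicator_of_mem hxn, Set.indicator_of_mem (Iset_anti h hxn)]
    rw [abs_of_nonneg (by linarith)]
    have h0 : (0:ℝ) < 2 ^ m := by positivity
    linarith
  · rw [Set.indicator_of_notMem hxn]
    by_cases hxm : x ∈ Iset m
    · rw [Set.indicator_of_mem hxm]
      have h0 : (0:ℝ) < 2 ^ m := by positivity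
      rw [abs_of_nonpos (by linarith)]
      linarith
    · rw [Set.indicator_of_notMem hxm]
      simp only [sub_self, abs_zero]
      positivity

theorem atom_property (p α : ℝ) (hp0 : 0 < p) (hp1 : p ≤ 1) (hα : 0 ≤ α)
    (ak : ℕ) (hak : 2 ≤ ak) (a : WG × WG → ℝ)
    (ha : a = fun z => (2 : ℝ) ^ ((ak : ℝ) * (2 / p - 2) - 2 * (⌊α⌋₊ : ℝ) - 2) *
      ((Dir (2 ^ (ak + ⌊α⌋₊ + 1)) z.1 - Dir (2 ^ ak) z.1) *
       (Dir (2 ^ (ak + ⌊α⌋₊ + 1)) z.2 - Dir (2 ^ ak) z.2))) :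
    (∀ z, z ∉ (Iset ak) ×ˢ (Iset ak) → a z = 0) ∧
    (∫ z in (Iset ak) ×ˢ (Iset ak), a z ∂μ2) = 0 ∧
    (∀ z, |a z| ≤ (2 : ℝ) ^ (2 * (ak : ℝ) / p)) ∧
    (2 : ℝ) ^ (2 * (ak : ℝ) / p) = (μ2 ((Iset ak) ×ˢ (Iset ak))).toReal ^ (-(1 : ℝ) / p) ∧
    IsPAtom p a := by
  set m := ⌊α⌋₊ with hm
  set N := ak + m + 1 with hN
  have hakN : ak ≤ N := by omega
  set C : ℝ := (2 : ℝ) ^ ((ak : ℝ) * (2 / p - 2) - 2 * (m : ℝ) - 2) with hC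
  have haz : ∀ z : WG × WG, a z =
      C * ((Dir (2 ^ N) z.1 - Dir (2 ^ ak) z.1) * (Dir (2 ^ N) z.2 - Dir (2 ^ ak) z.2)) := by
    intro z; rw [ha]
  have hC0 : (0 : ℝ) < C := Real.rpow_pos_of_pos (by norm_num) _
  have conj1 : ∀ z, z ∉ (Iset ak) ×ˢ (Iset ak) → a z = 0 := by
    intro z hz
    rw [haz]
    by_cases h1 : z.1 ∈ Iset ak
    · have h2 : z.2 ∉ Iset ak := fun h2 => hz (Set.mem_prod.2 ⟨h1, h2⟩)
      rw [dir_diff_supp hakN h2]; ring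
    · rw [dir_diff_supp hakN h1]; ring
  have hint : ∫ x, (Dir (2 ^ N) x - Dir (2 ^ ak) x) ∂μG = 0 := integral_dir_diff ak N
  have conj2 : (∫ z in (Iset ak) ×ˢ (Iset ak), a z ∂μ2) = 0 := by
    rw [setIntegral_eq_integral_of_forall_compl_eq_zero conj1]
    have heq : (fun z : WG × WG => a z) = fun z : WG × WG =>
        (fun x => C * (Dir (2 ^ N) x - Dir (2 ^ ak) x)) z.1 *
        (fun x => (Dir (2 ^ N) x - Dir (2 ^ ak) x)) z.2 := by
      funext z; rw [haz]; ring
    rw [heq]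
    show (∫ z, _ ∂(μG.prod μG)) = 0
    have hpm := MeasureTheory.integral_prod_mul (μ := μG) (ν := μG)
      (f := fun x => C * (Dir (2 ^ N) x - Dir (2 ^ ak) x))
      (g := fun x => Dir (2 ^ N) x - Dir (2 ^ ak) x)
    rw [hpm, hint, mul_zero]
  have conj3 : ∀ z : WG × WG, |a z| ≤ (2 : ℝ) ^ (2 * (ak : ℝ) / p) := by
    intro z
    rw [haz, abs_mul, abs_mul, abs_of_pos hC0]
    have b1 : |Dir (2 ^ N) z.1 - Dir (2 ^ ak) z.1| ≤ 2 ^ N := dir_diff_abs hakN z.1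
    have b2 : |Dir (2 ^ N) z.2 - Dir (2 ^ ak) z.2| ≤ 2 ^ N := dir_diff_abs hakN z.2
    have key : C * ((2 : ℝ) ^ N * (2 : ℝ) ^ N) = (2 : ℝ) ^ (2 * (ak : ℝ) / p) := by
      rw [hC, ← Real.rpow_natCast 2 N, ← Real.rpow_add (by norm_num : (0:ℝ) < 2),
        ← Real.rpow_add (by norm_num : (0:ℝ) < 2)]
      congr 1
      have hNc : (N : ℝ) = (ak : ℝ) + (m : ℝ) + 1 := by rw [hN]; push_cast; ring
      rw [hNc]; ring
    calc C * (|Dir (2 ^ N) z.1 - Dir (2 ^ ak) z.1| * |Dir (2 ^ N) z.2 - Dir (2 ^ ak) z.2|)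
        ≤ C * ((2 : ℝ) ^ N * (2 : ℝ) ^ N) := by
          apply mul_le_mul_of_nonneg_left _ hC0.le
          exact mul_le_mul b1 b2 (abs_nonneg _) (by positivity)
      _ = (2 : ℝ) ^ (2 * (ak : ℝ) / p) := key
  have conj4 : (2 : ℝ) ^ (2 * (ak : ℝ) / p) =
      (μ2 ((Iset ak) ×ˢ (Iset ak))).toReal ^ (-(1 : ℝ) / p) := by
    have hμ : μ2 ((Iset ak) ×ˢ (Iset ak)) = μG (Iset ak) * μG (Iset ak) :=
      MeasureTheory.Measure.prod_prod _ _
    rw [hμ, μ_Iset, ENNReal.toReal_mul, ENNReal.toReal_inv]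
    simp only [ENNReal.toReal_pow, ENNReal.toReal_ofNat]
    have h2 : ((2:ℝ) ^ ak)⁻¹ * ((2:ℝ) ^ ak)⁻¹ = (2 : ℝ) ^ (-(2 * (ak : ℝ))) := by
      rw [← Real.rpow_natCast 2 ak, ← Real.rpow_neg (by norm_num),
        ← Real.rpow_add (by norm_num : (0:ℝ) < 2)]
      congr 1; ring
    rw [h2, ← Real.rpow_mul (by norm_num : (0:ℝ) ≤ 2)]
    congr 1; ring
  refine ⟨conj1, conj2, conj3, conj4, ?_, ?_⟩
  · rw [ha]
    exact ((((measurable_dir _).comp measurable_fst).sub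
      ((measurable_dir _).comp measurable_fst)).mul
      (((measurable_dir _).comp measurable_snd).sub
      ((measurable_dir _).comp measurable_snd))).const_mul _
  · have h0 : IsetC ak (0 : WG) = Iset ak := by
      ext x; simp [IsetC, Iset]
    exact ⟨ak, 0, 0, by rw [h0]; exact conj1, by rw [h0]; exact conj2,
      fun z => by rw [h0, ← conj4]; exact conj3 z⟩

end
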